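/- arXiv:2407.08254 — 3 statements merged into one kernel-verified Lean document; each statement's English description precedes it below -/
import Mathlib

section
/- In a finite generalized ordinal potential game (finite player set, finite strategy sets, potential Φ satisfying: U_n(x_n,x_{-n}) > U_n(x'_n,x_{-n}) ⇒ Φ(x_n,x_{-n}) > Φ(x'_n,x_{-n})), there exists at least one pure-strategy Nash equilibrium. -/
/-- Every finite generalized ordinal potential game has a pure-strategy Nash equilibrium. -/
theorem exists_PSNE_of_generalized_ordinal_potential
    {ι : Type*} [Fintype ι] [Nonempty ι] {X : ι → Type*}
    [∀ n, Fintype (X n)] [∀ n, Nonempty (X n)] [DecidableEq ι]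
    (U : ι → (∀ n, X n) → ℝ) (Φ : (∀ n, X n) → ℝ)
    (hpot : ∀ (n : ι) (x : ∀ m, X m) (a : X n),
      U n x > U n (Function.update x n a) → Φ x > Φ (Function.update x n a)) :
    ∃ xstar : ∀ n, X n, ∀ (n : ι) (a : X n),
      U n (Function.update xstar n a) ≤ U n xstar := by
  obtain ⟨xstar, hmax⟩ := Finite.exists_max Φ
  refine ⟨xstar, fun n a => ?_⟩
  by_contra h
  push_neg at h
  have := hpot n (Function.update xstar n a) (xstar n) (by
    simpa [Function.update_idem, Function.update_eq_self] using h)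
  simp [Function.update_idem, Function.update_eq_self] at this
  exact absurd (hmax (Function.update xstar n a)) (not_le.mpr this)
end

section
/- Let x be a random joint strategy (a probability distribution π over joint strategies valued in a real vector space) forming a coarse correlated equilibrium, i.e., E[U_n(x)] ≥ E[U_n(x'_n, x_{-n})] for all players n and all pure deviations x'_n. Assume (Property 1) Σ_n U_n is concave in the joint strategy, and (Property 2) each U_n(x_n, x_{-n}) is convex in x_{-n} for fixed x_n. Let x̄ = E_π[x]. Then U_n(x̄) = E[U_n(x)] for every n. -/
/-- At a coarse correlated equilibrium, if the sum of utilities is concave in the joint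
strategy and each utility is convex in the opponents' profile, then each player's expected
utility equals its utility at the mean strategy profile. -/
theorem cce_expected_utility_eq_utility_of_mean
    {ι : Type*} [Fintype ι] [DecidableEq ι]
    {E : ι → Type*} [∀ n, AddCommGroup (E n)] [∀ n, Module ℝ (E n)]
    {Ω : Type*} [Fintype Ω]
    (π : Ω → ℝ) (hπ0 : ∀ ω, 0 ≤ π ω) (hπ1 : ∑ ω, π ω = 1)
    (x : Ω → ∀ n, E n)
    (U : ι → (∀ n, E n) → ℝ)
    (hconcave : ConcaveOn ℝ Set.univ (fun y : ∀ n, E n => ∑ n, U n y))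
    (hconvex : ∀ (n : ι) (a : E n),
      ConvexOn ℝ Set.univ (fun y : ∀ m, E m => U n (Function.update y n a)))
    (hCCE : ∀ (n : ι) (a : E n),
      ∑ ω, π ω * U n (x ω) ≥ ∑ ω, π ω * U n (Function.update (x ω) n a)) :
    ∀ n : ι, U n (fun m => ∑ ω, π ω • x ω m) = ∑ ω, π ω * U n (x ω) := by
  set xbar : ∀ n, E n := fun m => ∑ ω, π ω • x ω m with hxbar
  have hxbar_sum : xbar = ∑ ω, π ω • x ω := by
    funext m
    simp [hxbar, Finset.sum_apply]
  -- Termwise upper bound: U n xbar ≤ ∑ ω, π ω * U n (x ω)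
  have hub : ∀ n, U n xbar ≤ ∑ ω, π ω * U n (x ω) := by
    intro n
    have h1 := (hconvex n (xbar n)).map_sum_le (t := Finset.univ)
      (fun ω _ => hπ0 ω) hπ1 (fun ω _ => Set.mem_univ (x ω))
    rw [← hxbar_sum] at h1
    rw [Function.update_eq_self] at h1
    simp only [smul_eq_mul] at h1
    exact le_trans h1 (hCCE n (xbar n))
  -- Sum lower bound via concavity
  have hlb : ∑ ω, π ω * (∑ n, U n (x ω)) ≤ ∑ n, U n xbar := by
    have h2 := hconcave.le_map_sum (t := Finset.univ)
      (fun ω _ => hπ0 ω) hπ1 (fun ω _ => Set.mem_univ (x ω))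
    rw [← hxbar_sum] at h2
    simpa using h2
  have hswap : ∑ ω, π ω * (∑ n, U n (x ω)) = ∑ n, ∑ ω, π ω * U n (x ω) := by
    rw [Finset.sum_comm]
    congr 1
    funext ω
    rw [Finset.mul_sum]
  rw [hswap] at hlb
  have hsum_le : ∑ n, U n xbar ≤ ∑ n, ∑ ω, π ω * U n (x ω) :=
    Finset.sum_le_sum (fun n _ => hub n)
  have heq : ∑ n, U n xbar = ∑ n, ∑ ω, π ω * U n (x ω) :=
    le_antisymm hsum_le hlb
  intro n
  have := (Finset.sum_eq_sum_iff_of_le (fun i _ => hub i)).mp heq n (Finset.mem_univ n)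
  exact this
end

section
/- Under the hypotheses of the previous statement (x a coarse correlated equilibrium, Σ_n U_n concave in the joint strategy, each U_n convex in x_{-n}), the mean profile x̄ = E[x] is a pure-strategy Nash equilibrium: for every player n and every pure strategy x'_n, U_n(x̄_n, x̄_{-n}) ≥ U_n(x'_n, x̄_{-n}). -/
/-- Theorem 1: the mean of a coarse correlated equilibrium is a pure-strategy Nash
equilibrium when the sum of utilities is concave in the joint strategy and each utility
is convex in the opponents' profile. -/
theorem cce_mean_is_PSNE
    {ι : Type*} [Fintype ι] [DecidableEq ι]
    {E : ι → Type*} [∀ n, AddCommGroup (E n)] [∀ n, Module ℝ (E n)]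
    {Ω : Type*} [Fintype Ω]
    (π : Ω → ℝ) (hπ0 : ∀ ω, 0 ≤ π ω) (hπ1 : ∑ ω, π ω = 1)
    (x : Ω → ∀ n, E n)
    (U : ι → (∀ n, E n) → ℝ)
    (hconcave : ConcaveOn ℝ Set.univ (fun y : ∀ n, E n => ∑ n, U n y))
    (hconvex : ∀ (n : ι) (a : E n),
      ConvexOn ℝ Set.univ (fun y : ∀ m, E m => U n (Function.update y n a)))
    (hCCE : ∀ (n : ι) (a : E n),
      ∑ ω, π ω * U n (x ω) ≥ ∑ ω, π ω * U n (Function.update (x ω) n a)) :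
    ∀ (n : ι) (a : E n),
      U n (fun m => ∑ ω, π ω • x ω m)
        ≥ U n (Function.update (fun m => ∑ ω, π ω • x ω m) n a) := by
  set xb : ∀ m, E m := fun m => ∑ ω, π ω • x ω m with hxbdef
  have hxb : xb = ∑ ω, π ω • x ω := by
    funext m; simp [hxbdef, Finset.sum_apply]
  -- Jensen for each convex function
  have jensen : ∀ (n : ι) (a : E n),
      U n (Function.update xb n a) ≤ ∑ ω, π ω * U n (Function.update (x ω) n a) := by
    intro n a
    have := (hconvex n a).map_sum_le (t := Finset.univ) (w := π) (p := x)
      (fun i _ => hπ0 i) hπ1 (fun i _ => Set.mem_univ _)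
    simpa [hxb, smul_eq_mul] using this
  -- each player's expected utility ≥ utility at the mean
  have key : ∀ n, U n xb ≤ ∑ ω, π ω * U n (x ω) := by
    intro n
    have h1 := jensen n (xb n)
    rw [Function.update_eq_self] at h1
    exact h1.trans (hCCE n (xb n))
  -- concavity of the sum
  have hsum : ∑ n, ∑ ω, π ω * U n (x ω) ≤ ∑ n, U n xb := by
    have := hconcave.le_map_sum (t := Finset.univ) (w := π) (p := x)
      (fun i _ => hπ0 i) hπ1 (fun i _ => Set.mem_univ _)
    rw [← hxb] at this
    calc ∑ n, ∑ ω, π ω * U n (x ω) = ∑ ω, π ω * ∑ n, U n (x ω) := by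
          rw [Finset.sum_comm]; simp [Finset.mul_sum]
      _ ≤ ∑ n, U n xb := by simpa [smul_eq_mul] using this
  -- hence equality for each n
  have heq : ∀ n, U n xb = ∑ ω, π ω * U n (x ω) := by
    intro n
    by_contra h
    have hlt : U n xb < ∑ ω, π ω * U n (x ω) := lt_of_le_of_ne (key n) h
    have : ∑ m, U m xb < ∑ m, ∑ ω, π ω * U m (x ω) :=
      Finset.sum_lt_sum (fun m _ => key m) ⟨n, Finset.mem_univ n, hlt⟩
    linarith [hsum]
  intro n a
  calc U n (Function.update xb n a) ≤ ∑ ω, π ω * U n (Function.update (x ω) n a) := jensen n a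
    _ ≤ ∑ ω, π ω * U n (x ω) := hCCE n a
    _ = U n xb := (heq n).symm
end
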